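/- Let L₁, L₂ > 0, Ω = (0, L₁) × (0, L₂) ⊆ ℝ², k ≥ 0, D > 0, M₂ ≥ 0, κ₁ > 0, and let κ : ℝ² → ℝ be continuous with κ(x) ≥ κ₁ for all x in the closure of Ω. Let u = (u₁, u₂) : [0, ∞) × ℝ² → ℝ² be continuous on [0, ∞) × cl(Ω), and let c : [0, ∞) × ℝ² → ℝ be continuous on [0, ∞) × cl(Ω), continuously differentiable in t and twice continuously differentiable in x on (0, ∞) × cl(Ω). Assume: (i) ∂u₁/∂x₁ + ∂u₂/∂x₂ = 0 on (0, ∞) × Ω; (ii) (1 + k)·∂c/∂t + u₁·∂c/∂x₁ + u₂·∂c/∂x₂ = D·(∂²c/∂x₁² + ∂²c/∂x₂²) − κ·c on (0, ∞) × Ω; (iii) for all t > 0: u₁(t, x) = 0 and ∂c/∂x₁(t, x) = 0 whenever x₁ ∈ {0, L₁} and x₂ ∈ [0, L₂], and u₂(t, x) = 0 and ∂c/∂x₂(t, x) = 0 whenever x₂ ∈ {0, L₂} and x₁ ∈ [0, L₁]; (iv) 0 ≤ c(0, x) ≤ M₂ for all x ∈ cl(Ω). Then 0 ≤ c(t, x)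 ≤ M₂·exp(−κ₁·t/(1 + k)) for all t ≥ 0 and all x ∈ cl(Ω); in particular sup_{x ∈ cl(Ω)} |c(t, x)| decays exponentially to 0 as t → ∞. -/

import Mathlib

/-!
With `r = κ₁/(1+k)`, the function `w = e^{rt} c` solves the same equation with reaction rate
`κ - κ₁ ≥ 0`, so it suffices to prove a weak maximum principle: a solution with nonnegative
reaction rate and no-flux boundary data stays below `M ≥ 0` if it starts below `M` (applied
to `w` and `-w`). At a maximum of `w - εt` over `[0,T] × cl(Ω)` with `t > 0` and `w ≥ 0` one
has `∂ₜw ≥ ε`, `∇w = 0` (Fermat inside, the no-flux condition on the boundary) and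
`∂²ₓw, ∂²ᵧw ≤ 0`, contradicting the equation; then let `ε → 0`. The equation, assumed on the
open rectangle, holds on its closure by continuity.
-/

open Set Filter Topology

namespace IsMaxOn

variable {f f' : ℝ → ℝ} {a b x d d' : ℝ}

theorem hasDerivAt_nonneg (h : IsMaxOn f (Icc a b) x) (hx : x ∈ Ioc a b)
    (hf : HasDerivAt f d x) : 0 ≤ d := by
  refine ge_of_tendsto ((hasDerivAt_iff_tendsto_slope.1 hf).mono_left (nhdsLT_le_nhdsNE x)) ?_
  filter_upwards [Ioo_mem_nhdsLT hx.1] with y hy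
  rw [slope_def_field]
  exact div_nonneg_of_nonpos (sub_nonpos.2 (h ⟨hy.1.le, hy.2.le.trans hx.2⟩))
    (sub_nonpos.2 hy.2.le)

theorem hasDerivAt_eq_zero_of_endpoints (h : IsMaxOn f (Icc a b) x) (hx : x ∈ Icc a b)
    (hf : HasDerivAt f d x) (ha : x = a → d = 0) (hb : x = b → d = 0) : d = 0 := by
  rcases hx.1.eq_or_lt with rfl | hax
  · exact ha rfl
  rcases hx.2.eq_or_lt with rfl | hxb
  · exact hb rfl
  exact (h.isLocalMax (Icc_mem_nhds hax hxb)).hasDerivAt_eq_zero hf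

theorem hasDerivAt_second_nonpos (h : IsMaxOn f (Icc a b) x) (hab : a < b) (hx : x ∈ Icc a b)
    (hf : ∀ y ∈ Icc a b, HasDerivAt f (f' y) y) (hf'x : f' x = 0) (hf' : HasDerivAt f' d' x) :
    d' ≤ 0 := by
  by_contra! hpos
  -- `f'` vanishes at `x` and increases through it, so `f` increases away from `x` on either side
  have hslope : ∀ᶠ y in 𝓝[≠] x, 0 < slope f' x y :=
    (hasDerivAt_iff_tendsto_slope.1 hf').eventually (lt_mem_nhds hpos)
  have hcont : ContinuousOn f (Icc a b) := fun y hy => (hf y hy).continuousAt.continuousWithinAt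
  rcases hx.2.lt_or_eq with hxb | rfl
  · obtain ⟨c, ⟨hxc, hcb⟩, hc⟩ :=
      (mem_nhdsGT_iff_exists_mem_Ioc_Ioo_subset hxb).1 (nhdsGT_le_nhdsNE x hslope)
    have hsub : Icc x c ⊆ Icc a b := Icc_subset_Icc hx.1 hcb
    have hmono : StrictMonoOn f (Icc x c) := by
      refine strictMonoOn_of_hasDerivWithinAt_pos (convex_Icc x c) (hcont.mono hsub)
        (fun y hy => ((hf y (hsub (interior_subset hy))).hasDerivWithinAt)) fun y hy => ?_
      rw [interior_Icc] at hy
      exact pos_of_slope_pos hy.1 (hc hy) hf'x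
    exact (hmono (left_mem_Icc.2 hxc.le) (right_mem_Icc.2 hxc.le) hxc).not_ge
      (h (hsub (right_mem_Icc.2 hxc.le)))
  · obtain ⟨c, ⟨hac, hcx⟩, hc⟩ :=
      (mem_nhdsLT_iff_exists_mem_Ico_Ioo_subset hab).1 (nhdsLT_le_nhdsNE x hslope)
    have hsub : Icc c x ⊆ Icc a x := Icc_subset_Icc hac le_rfl
    have hanti : StrictAntiOn f (Icc c x) := by
      refine strictAntiOn_of_hasDerivWithinAt_neg (convex_Icc c x) (hcont.mono hsub)
        (fun y hy => ((hf y (hsub (interior_subset hy))).hasDerivWithinAt)) fun y hy => ?_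
      rw [interior_Icc] at hy
      exact neg_of_slope_pos hy.2 (hc hy) hf'x
    exact (hanti (left_mem_Icc.2 hcx.le) (right_mem_Icc.2 hcx.le) hcx).not_ge
      (h (hsub (left_mem_Icc.2 hcx.le)))

end IsMaxOn

theorem forall_eq_of_forall_eq_Ioo {s : Set ℝ} {a₁ b₁ a₂ b₂ : ℝ} (h₁ : a₁ < b₁) (h₂ : a₂ < b₂)
    {F G : ℝ → ℝ → ℝ → ℝ}
    (hF : ContinuousOn (fun q : ℝ × ℝ × ℝ => F q.1 q.2.1 q.2.2) (s ×ˢ Icc a₁ b₁ ×ˢ Icc a₂ b₂))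
    (hG : ContinuousOn (fun q : ℝ × ℝ × ℝ => G q.1 q.2.1 q.2.2) (s ×ˢ Icc a₁ b₁ ×ˢ Icc a₂ b₂))
    (h : ∀ t ∈ s, ∀ x ∈ Ioo a₁ b₁, ∀ y ∈ Ioo a₂ b₂, F t x y = G t x y) :
    ∀ t ∈ s, ∀ x ∈ Icc a₁ b₁, ∀ y ∈ Icc a₂ b₂, F t x y = G t x y := by
  have hcl : s ×ˢ Icc a₁ b₁ ×ˢ Icc a₂ b₂ ⊆ closure (s ×ˢ Ioo a₁ b₁ ×ˢ Ioo a₂ b₂) := by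
    rw [closure_prod_eq, closure_prod_eq, closure_Ioo h₁.ne, closure_Ioo h₂.ne]
    exact prod_mono subset_closure subset_rfl
  have hext := EqOn.of_subset_closure (fun q hq => h q.1 hq.1 q.2.1 hq.2.1 q.2.2 hq.2.2) hF hG
    (prod_mono subset_rfl (prod_mono Ioo_subset_Icc_self Ioo_subset_Icc_self)) hcl
  exact fun t ht x hx y hy => hext (show (t, x, y) ∈ _ from ⟨ht, hx, hy⟩)

/-- `w` is a classical solution of `a ∂ₜw + u·∇w = DΔw − ρw` on `(0,∞) × [0,L₁] × [0,L₂]`,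
continuous up to `t = 0`, with no-flux boundary conditions; `wt, …, wyy` are its partial
derivatives. -/
structure IsNeumannSolution (L₁ L₂ a D : ℝ) (ρ : ℝ → ℝ → ℝ)
    (u₁ u₂ w wt wx wy wxx wyy : ℝ → ℝ → ℝ → ℝ) : Prop where
  continuousOn : ContinuousOn (fun q : ℝ × ℝ × ℝ => w q.1 q.2.1 q.2.2)
    (Ici 0 ×ˢ Icc 0 L₁ ×ˢ Icc 0 L₂)
  hasDerivAt_t : ∀ t > (0:ℝ), ∀ x ∈ Icc 0 L₁, ∀ y ∈ Icc 0 L₂,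
    HasDerivAt (fun s => w s x y) (wt t x y) t
  hasDerivAt_x : ∀ t > (0:ℝ), ∀ x ∈ Icc 0 L₁, ∀ y ∈ Icc 0 L₂,
    HasDerivAt (fun a => w t a y) (wx t x y) x
  hasDerivAt_y : ∀ t > (0:ℝ), ∀ x ∈ Icc 0 L₁, ∀ y ∈ Icc 0 L₂,
    HasDerivAt (fun b => w t x b) (wy t x y) y
  hasDerivAt_xx : ∀ t > (0:ℝ), ∀ x ∈ Icc 0 L₁, ∀ y ∈ Icc 0 L₂,
    HasDerivAt (fun a => wx t a y) (wxx t x y) x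
  hasDerivAt_yy : ∀ t > (0:ℝ), ∀ x ∈ Icc 0 L₁, ∀ y ∈ Icc 0 L₂,
    HasDerivAt (fun b => wy t x b) (wyy t x y) y
  pde : ∀ t > (0:ℝ), ∀ x ∈ Icc 0 L₁, ∀ y ∈ Icc 0 L₂,
    a * wt t x y + u₁ t x y * wx t x y + u₂ t x y * wy t x y =
      D * (wxx t x y + wyy t x y) - ρ x y * w t x y
  neumann_x : ∀ t > (0:ℝ), ∀ y ∈ Icc 0 L₂, wx t 0 y = 0 ∧ wx t L₁ y = 0
  neumann_y : ∀ t > (0:ℝ), ∀ x ∈ Icc 0 L₁, wy t x 0 = 0 ∧ wy t x L₂ = 0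

namespace IsNeumannSolution

variable {L₁ L₂ a D : ℝ} {ρ : ℝ → ℝ → ℝ} {u₁ u₂ w wt wx wy wxx wyy : ℝ → ℝ → ℝ → ℝ}

theorem neg (h : IsNeumannSolution L₁ L₂ a D ρ u₁ u₂ w wt wx wy wxx wyy) :
    IsNeumannSolution L₁ L₂ a D ρ u₁ u₂ (fun t x y => -w t x y) (fun t x y => -wt t x y)
      (fun t x y => -wx t x y) (fun t x y => -wy t x y) (fun t x y => -wxx t x y)
      (fun t x y => -wyy t x y) where
  continuousOn := h.continuousOn.neg
  hasDerivAt_t t ht x hx y hy := (h.hasDerivAt_t t ht x hx y hy).neg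
  hasDerivAt_x t ht x hx y hy := (h.hasDerivAt_x t ht x hx y hy).neg
  hasDerivAt_y t ht x hx y hy := (h.hasDerivAt_y t ht x hx y hy).neg
  hasDerivAt_xx t ht x hx y hy := (h.hasDerivAt_xx t ht x hx y hy).neg
  hasDerivAt_yy t ht x hx y hy := (h.hasDerivAt_yy t ht x hx y hy).neg
  pde t ht x hx y hy := by linear_combination -h.pde t ht x hx y hy
  neumann_x t ht y hy := by simp [h.neumann_x t ht y hy]
  neumann_y t ht x hx := by simp [h.neumann_y t ht x hx]

theorem exp_mul (h : IsNeumannSolution L₁ L₂ a D ρ u₁ u₂ w wt wx wy wxx wyy) (r : ℝ) :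
    IsNeumannSolution L₁ L₂ a D (fun x y => ρ x y - a * r) u₁ u₂
      (fun t x y => Real.exp (r * t) * w t x y)
      (fun t x y => Real.exp (r * t) * (r * w t x y + wt t x y))
      (fun t x y => Real.exp (r * t) * wx t x y) (fun t x y => Real.exp (r * t) * wy t x y)
      (fun t x y => Real.exp (r * t) * wxx t x y)
      (fun t x y => Real.exp (r * t) * wyy t x y) where
  continuousOn := (Real.continuous_exp.comp (continuous_const.mul continuous_fst)).continuousOn.mul
    h.continuousOn
  hasDerivAt_t t ht x hx y hy :=
    (((hasDerivAt_id t).const_mul r).exp.mul (h.hasDerivAt_t t ht x hx y hy)).congr_deriv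
      (by simp only [id]; ring)
  hasDerivAt_x t ht x hx y hy := (h.hasDerivAt_x t ht x hx y hy).const_mul _
  hasDerivAt_y t ht x hx y hy := (h.hasDerivAt_y t ht x hx y hy).const_mul _
  hasDerivAt_xx t ht x hx y hy := (h.hasDerivAt_xx t ht x hx y hy).const_mul _
  hasDerivAt_yy t ht x hx y hy := (h.hasDerivAt_yy t ht x hx y hy).const_mul _
  pde t ht x hx y hy := by linear_combination Real.exp (r * t) * h.pde t ht x hx y hy
  neumann_x t ht y hy := by simp [h.neumann_x t ht y hy]
  neumann_y t ht x hx := by simp [h.neumann_y t ht x hx]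

theorem not_isMaxOn_sub_mul_fst (h : IsNeumannSolution L₁ L₂ a D ρ u₁ u₂ w wt wx wy wxx wyy)
    (hL₁ : 0 < L₁) (hL₂ : 0 < L₂) (ha : 0 < a) (hD : 0 ≤ D)
    (hρ : ∀ x ∈ Icc 0 L₁, ∀ y ∈ Icc 0 L₂, 0 ≤ ρ x y) {T ε t x y : ℝ} (hε : 0 < ε)
    (ht : t ∈ Ioc 0 T) (hx : x ∈ Icc 0 L₁) (hy : y ∈ Icc 0 L₂) (hw : 0 ≤ w t x y) :
    ¬ IsMaxOn (fun q : ℝ × ℝ × ℝ => w q.1 q.2.1 q.2.2 - ε * q.1)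
      (Icc 0 T ×ˢ Icc 0 L₁ ×ˢ Icc 0 L₂) (t, x, y) := by
  intro hmax
  have ht' : t ∈ Icc 0 T := Ioc_subset_Icc_self ht
  have hmax_t : IsMaxOn (fun s => w s x y - ε * s) (Icc 0 T) t :=
    fun s hs => hmax (show (s, x, y) ∈ _ from ⟨hs, hx, hy⟩)
  have hmax_x : IsMaxOn (fun b => w t b y) (Icc 0 L₁) x :=
    fun b hb => by simpa using hmax (show (t, b, y) ∈ _ from ⟨ht', hb, hy⟩)
  have hmax_y : IsMaxOn (fun b => w t x b) (Icc 0 L₂) y :=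
    fun b hb => by simpa using hmax (show (t, x, b) ∈ _ from ⟨ht', hx, hb⟩)
  have hwt : ε ≤ wt t x y := by
    have := hmax_t.hasDerivAt_nonneg ht
      ((h.hasDerivAt_t t ht.1 x hx y hy).sub ((hasDerivAt_id t).const_mul ε))
    linarith
  have hwx : wx t x y = 0 := hmax_x.hasDerivAt_eq_zero_of_endpoints hx
    (h.hasDerivAt_x t ht.1 x hx y hy) (fun hx0 => hx0 ▸ (h.neumann_x t ht.1 y hy).1)
    (fun hxL => hxL ▸ (h.neumann_x t ht.1 y hy).2)
  have hwy : wy t x y = 0 := hmax_y.hasDerivAt_eq_zero_of_endpoints hy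
    (h.hasDerivAt_y t ht.1 x hx y hy) (fun hy0 => hy0 ▸ (h.neumann_y t ht.1 x hx).1)
    (fun hyL => hyL ▸ (h.neumann_y t ht.1 x hx).2)
  have hwxx : wxx t x y ≤ 0 := hmax_x.hasDerivAt_second_nonpos hL₁ hx
    (fun b hb => h.hasDerivAt_x t ht.1 b hb y hy) hwx (h.hasDerivAt_xx t ht.1 x hx y hy)
  have hwyy : wyy t x y ≤ 0 := hmax_y.hasDerivAt_second_nonpos hL₂ hy
    (fun b hb => h.hasDerivAt_y t ht.1 x hx b hb) hwy (h.hasDerivAt_yy t ht.1 x hx y hy)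
  have hpde := h.pde t ht.1 x hx y hy
  rw [hwx, hwy, mul_zero, mul_zero, add_zero, add_zero] at hpde
  nlinarith [mul_nonneg (hρ x hx y hy) hw, mul_nonpos_of_nonneg_of_nonpos hD (add_nonpos hwxx hwyy)]

theorem le_add_mul_of_le_initial (h : IsNeumannSolution L₁ L₂ a D ρ u₁ u₂ w wt wx wy wxx wyy)
    (hL₁ : 0 < L₁) (hL₂ : 0 < L₂) (ha : 0 < a) (hD : 0 ≤ D)
    (hρ : ∀ x ∈ Icc 0 L₁, ∀ y ∈ Icc 0 L₂, 0 ≤ ρ x y) {M : ℝ} (hM : 0 ≤ M)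
    (hinit : ∀ x ∈ Icc 0 L₁, ∀ y ∈ Icc 0 L₂, w 0 x y ≤ M) {ε t x y : ℝ} (hε : 0 < ε)
    (ht : 0 ≤ t) (hx : x ∈ Icc 0 L₁) (hy : y ∈ Icc 0 L₂) : w t x y ≤ M + ε * t := by
  set v : ℝ × ℝ × ℝ → ℝ := fun q => w q.1 q.2.1 q.2.2 - ε * q.1 with hv
  have hmem : (t, x, y) ∈ Icc 0 t ×ˢ Icc 0 L₁ ×ˢ Icc 0 L₂ := ⟨right_mem_Icc.2 ht, hx, hy⟩
  have hvcont : ContinuousOn v (Icc 0 t ×ˢ Icc 0 L₁ ×ˢ Icc 0 L₂) :=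
    (h.continuousOn.mono (prod_mono Icc_subset_Ici_self subset_rfl)).sub (by fun_prop)
  obtain ⟨⟨t₀, x₀, y₀⟩, ⟨ht₀, hx₀, hy₀⟩, hmax⟩ :=
    (isCompact_Icc.prod (isCompact_Icc.prod isCompact_Icc)).exists_isMaxOn ⟨_, hmem⟩ hvcont
  suffices hvM : v (t₀, x₀, y₀) ≤ M by
    have : v (t, x, y) ≤ v (t₀, x₀, y₀) := hmax hmem
    simp only [hv] at this hvM
    linarith
  by_contra! hvM
  simp only [hv] at hvM
  rcases ht₀.1.eq_or_lt with rfl | ht₀pos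
  · linarith [hinit x₀ hx₀ y₀ hy₀]
  · exact h.not_isMaxOn_sub_mul_fst hL₁ hL₂ ha hD hρ hε ⟨ht₀pos, ht₀.2⟩ hx₀ hy₀
      (by nlinarith) hmax

theorem le_of_le_initial (h : IsNeumannSolution L₁ L₂ a D ρ u₁ u₂ w wt wx wy wxx wyy)
    (hL₁ : 0 < L₁) (hL₂ : 0 < L₂) (ha : 0 < a) (hD : 0 ≤ D)
    (hρ : ∀ x ∈ Icc 0 L₁, ∀ y ∈ Icc 0 L₂, 0 ≤ ρ x y) {M : ℝ} (hM : 0 ≤ M)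
    (hinit : ∀ x ∈ Icc 0 L₁, ∀ y ∈ Icc 0 L₂, w 0 x y ≤ M) {t x y : ℝ}
    (ht : 0 ≤ t) (hx : x ∈ Icc 0 L₁) (hy : y ∈ Icc 0 L₂) : w t x y ≤ M := by
  have hlim : Tendsto (fun ε => M + ε * t) (𝓝[>] 0) (𝓝 M) :=
    tendsto_nhdsWithin_of_tendsto_nhds
      (by simpa using (continuous_mul_const t).tendsto 0 |>.const_add M)
  exact ge_of_tendsto hlim (eventually_nhdsWithin_of_forall fun ε hε =>
    h.le_add_mul_of_le_initial hL₁ hL₂ ha hD hρ hM hinit hε ht hx hy)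

end IsNeumannSolution

theorem stmt_19_general (L₁ L₂ k D M₂ κ₁ : ℝ) (hL₁ : 0 < L₁) (hL₂ : 0 < L₂)
    (hk : 0 ≤ k) (hD : 0 < D) (hM₂ : 0 ≤ M₂)
    (κ : ℝ → ℝ → ℝ)
    (hκcont : ContinuousOn (fun q : ℝ × ℝ => κ q.1 q.2) (Set.Icc 0 L₁ ×ˢ Set.Icc 0 L₂))
    (hκlb : ∀ x ∈ Set.Icc 0 L₁, ∀ y ∈ Set.Icc 0 L₂, κ₁ ≤ κ x y)
    (u₁ u₂ c ct cx cy cxx cyy : ℝ → ℝ → ℝ → ℝ)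
    -- continuity of the velocity on `[0,∞) × cl(Ω)`
    (hu₁cont : ContinuousOn (fun q : ℝ × ℝ × ℝ => u₁ q.1 q.2.1 q.2.2)
      (Set.Ici 0 ×ˢ Set.Icc 0 L₁ ×ˢ Set.Icc 0 L₂))
    (hu₂cont : ContinuousOn (fun q : ℝ × ℝ × ℝ => u₂ q.1 q.2.1 q.2.2)
      (Set.Ici 0 ×ˢ Set.Icc 0 L₁ ×ˢ Set.Icc 0 L₂))
    -- continuity of the concentration on `[0,∞) × cl(Ω)`
    (hccont : ContinuousOn (fun q : ℝ × ℝ × ℝ => c q.1 q.2.1 q.2.2)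
      (Set.Ici 0 ×ˢ Set.Icc 0 L₁ ×ˢ Set.Icc 0 L₂))
    -- existence of the partial derivatives of `c` on `(0,∞) × cl(Ω)`
    (hct : ∀ t > (0:ℝ), ∀ x ∈ Set.Icc 0 L₁, ∀ y ∈ Set.Icc 0 L₂,
      HasDerivAt (fun s => c s x y) (ct t x y) t)
    (hcx : ∀ t > (0:ℝ), ∀ x ∈ Set.Icc 0 L₁, ∀ y ∈ Set.Icc 0 L₂,
      HasDerivAt (fun a => c t a y) (cx t x y) x)
    (hcy : ∀ t > (0:ℝ), ∀ x ∈ Set.Icc 0 L₁, ∀ y ∈ Set.Icc 0 L₂,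
      HasDerivAt (fun b => c t x b) (cy t x y) y)
    (hcxx : ∀ t > (0:ℝ), ∀ x ∈ Set.Icc 0 L₁, ∀ y ∈ Set.Icc 0 L₂,
      HasDerivAt (fun a => cx t a y) (cxx t x y) x)
    (hcyy : ∀ t > (0:ℝ), ∀ x ∈ Set.Icc 0 L₁, ∀ y ∈ Set.Icc 0 L₂,
      HasDerivAt (fun b => cy t x b) (cyy t x y) y)
    -- continuity of the partial derivatives of `c` on `(0,∞) × cl(Ω)`
    (hctcont : ContinuousOn (fun q : ℝ × ℝ × ℝ => ct q.1 q.2.1 q.2.2)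
      (Set.Ioi 0 ×ˢ Set.Icc 0 L₁ ×ˢ Set.Icc 0 L₂))
    (hcxcont : ContinuousOn (fun q : ℝ × ℝ × ℝ => cx q.1 q.2.1 q.2.2)
      (Set.Ioi 0 ×ˢ Set.Icc 0 L₁ ×ˢ Set.Icc 0 L₂))
    (hcycont : ContinuousOn (fun q : ℝ × ℝ × ℝ => cy q.1 q.2.1 q.2.2)
      (Set.Ioi 0 ×ˢ Set.Icc 0 L₁ ×ˢ Set.Icc 0 L₂))
    (hcxxcont : ContinuousOn (fun q : ℝ × ℝ × ℝ => cxx q.1 q.2.1 q.2.2)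
      (Set.Ioi 0 ×ˢ Set.Icc 0 L₁ ×ˢ Set.Icc 0 L₂))
    (hcyycont : ContinuousOn (fun q : ℝ × ℝ × ℝ => cyy q.1 q.2.1 q.2.2)
      (Set.Ioi 0 ×ˢ Set.Icc 0 L₁ ×ˢ Set.Icc 0 L₂))
    -- (ii) the PDE on `(0,∞) × Ω`
    (hpde : ∀ t > (0:ℝ), ∀ x ∈ Set.Ioo 0 L₁, ∀ y ∈ Set.Ioo 0 L₂,
      (1 + k) * ct t x y + u₁ t x y * cx t x y + u₂ t x y * cy t x y =
        D * (cxx t x y + cyy t x y) - κ x y * c t x y)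
    -- (iii) no-penetration and no-flux boundary conditions
    (hbc₁ : ∀ t > (0:ℝ), ∀ y ∈ Set.Icc 0 L₂,
      u₁ t 0 y = 0 ∧ u₁ t L₁ y = 0 ∧ cx t 0 y = 0 ∧ cx t L₁ y = 0)
    (hbc₂ : ∀ t > (0:ℝ), ∀ x ∈ Set.Icc 0 L₁,
      u₂ t x 0 = 0 ∧ u₂ t x L₂ = 0 ∧ cy t x 0 = 0 ∧ cy t x L₂ = 0)
    -- (iv) bounds on the initial data
    (hinit : ∀ x ∈ Set.Icc 0 L₁, ∀ y ∈ Set.Icc 0 L₂, 0 ≤ c 0 x y ∧ c 0 x y ≤ M₂) :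
    ∀ t, 0 ≤ t → ∀ x ∈ Set.Icc 0 L₁, ∀ y ∈ Set.Icc 0 L₂,
      0 ≤ c t x y ∧ c t x y ≤ M₂ * Real.exp (-κ₁ * t / (1 + k)) := by
  have hsub : Ioi 0 ×ˢ Icc 0 L₁ ×ˢ Icc 0 L₂ ⊆ Ici (0:ℝ) ×ˢ Icc 0 L₁ ×ˢ Icc 0 L₂ :=
    prod_mono Ioi_subset_Ici_self subset_rfl
  have hu₁ := hu₁cont.mono hsub
  have hu₂ := hu₂cont.mono hsub
  have hc := hccont.mono hsub
  have hκ : ContinuousOn (fun q : ℝ × ℝ × ℝ => κ q.2.1 q.2.2) (Ioi 0 ×ˢ Icc 0 L₁ ×ˢ Icc 0 L₂) :=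
    hκcont.comp continuous_snd.continuousOn fun q hq => hq.2
  have hsol : IsNeumannSolution L₁ L₂ (1 + k) D κ u₁ u₂ c ct cx cy cxx cyy :=
    ⟨hccont, hct, hcx, hcy, hcxx, hcyy,
      forall_eq_of_forall_eq_Ioo hL₁ hL₂ (by fun_prop) (by fun_prop) hpde,
      fun t ht y hy => ⟨(hbc₁ t ht y hy).2.2.1, (hbc₁ t ht y hy).2.2.2⟩,
      fun t ht x hx => ⟨(hbc₂ t ht x hx).2.2.1, (hbc₂ t ht x hx).2.2.2⟩⟩
  have h1k : 0 < 1 + k := by linarith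
  set r := κ₁ / (1 + k) with hr
  have hρ : ∀ x ∈ Icc 0 L₁, ∀ y ∈ Icc 0 L₂, 0 ≤ κ x y - (1 + k) * r := fun x hx y hy => by
    rw [hr, mul_div_cancel₀ _ h1k.ne']
    linarith [hκlb x hx y hy]
  have hw := hsol.exp_mul r
  intro t ht x hx y hy
  have hupper := hw.le_of_le_initial hL₁ hL₂ h1k hD.le hρ hM₂
    (by simpa using fun x hx y hy => (hinit x hx y hy).2) ht hx hy
  have hlower := hw.neg.le_of_le_initial hL₁ hL₂ h1k hD.le hρ le_rfl
    (by simpa using fun x hx y hy => (hinit x hx y hy).1) ht hx hy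
  have hexp : Real.exp (-κ₁ * t / (1 + k)) = (Real.exp (r * t))⁻¹ := by
    rw [← Real.exp_neg, hr]; ring_nf
  refine ⟨nonneg_of_mul_nonneg_right (by simpa using hlower) (Real.exp_pos _), ?_⟩
  rw [hexp, ← div_eq_mul_inv, le_div_iff₀ (Real.exp_pos _), mul_comm]
  exact hupper

/-- L∞ long-time decay for the adsorption–convection–diffusion–reaction equation
`(1+k)∂ₜc + u·∇c = DΔc − κc` on the rectangle `Ω = (0,L₁)×(0,L₂)` with divergence-free
velocity, no-penetration and no-flux boundary conditions, and reaction rate `κ ≥ κ₁ > 0`: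
if `0 ≤ c(0,·) ≤ M₂` on `cl(Ω)`, then `0 ≤ c(t,·) ≤ M₂·exp(−κ₁·t/(1+k))` on `cl(Ω)` for
all `t ≥ 0`.

Here `c t x y` is the concentration, `ct, cx, cy, cxx, cyy` are its partial derivatives
(first in time, first and second in each space variable), `u₁, u₂` the velocity components
with spatial derivatives `u₁x, u₂y`, `κ x y ≥ 0` the reaction rate, `k ≥ 0` the adsorption
coefficient and `D > 0` the diffusion coefficient. -/
theorem stmt_19 (L₁ L₂ k D M₂ κ₁ : ℝ) (hL₁ : 0 < L₁) (hL₂ : 0 < L₂)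
    (hk : 0 ≤ k) (hD : 0 < D) (hM₂ : 0 ≤ M₂) (hκ₁ : 0 < κ₁)
    (κ : ℝ → ℝ → ℝ)
    (hκcont : ContinuousOn (fun q : ℝ × ℝ => κ q.1 q.2) (Set.Icc 0 L₁ ×ˢ Set.Icc 0 L₂))
    (hκlb : ∀ x ∈ Set.Icc 0 L₁, ∀ y ∈ Set.Icc 0 L₂, κ₁ ≤ κ x y)
    (u₁ u₂ c ct cx cy cxx cyy u₁x u₂y : ℝ → ℝ → ℝ → ℝ)
    -- continuity of the velocity on `[0,∞) × cl(Ω)`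
    (hu₁cont : ContinuousOn (fun q : ℝ × ℝ × ℝ => u₁ q.1 q.2.1 q.2.2)
      (Set.Ici 0 ×ˢ Set.Icc 0 L₁ ×ˢ Set.Icc 0 L₂))
    (hu₂cont : ContinuousOn (fun q : ℝ × ℝ × ℝ => u₂ q.1 q.2.1 q.2.2)
      (Set.Ici 0 ×ˢ Set.Icc 0 L₁ ×ˢ Set.Icc 0 L₂))
    -- continuity of the concentration on `[0,∞) × cl(Ω)`
    (hccont : ContinuousOn (fun q : ℝ × ℝ × ℝ => c q.1 q.2.1 q.2.2)
      (Set.Ici 0 ×ˢ Set.Icc 0 L₁ ×ˢ Set.Icc 0 L₂))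
    -- existence of the partial derivatives of `c` on `(0,∞) × cl(Ω)`
    (hct : ∀ t > (0:ℝ), ∀ x ∈ Set.Icc 0 L₁, ∀ y ∈ Set.Icc 0 L₂,
      HasDerivAt (fun s => c s x y) (ct t x y) t)
    (hcx : ∀ t > (0:ℝ), ∀ x ∈ Set.Icc 0 L₁, ∀ y ∈ Set.Icc 0 L₂,
      HasDerivAt (fun a => c t a y) (cx t x y) x)
    (hcy : ∀ t > (0:ℝ), ∀ x ∈ Set.Icc 0 L₁, ∀ y ∈ Set.Icc 0 L₂,
      HasDerivAt (fun b => c t x b) (cy t x y) y)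
    (hcxx : ∀ t > (0:ℝ), ∀ x ∈ Set.Icc 0 L₁, ∀ y ∈ Set.Icc 0 L₂,
      HasDerivAt (fun a => cx t a y) (cxx t x y) x)
    (hcyy : ∀ t > (0:ℝ), ∀ x ∈ Set.Icc 0 L₁, ∀ y ∈ Set.Icc 0 L₂,
      HasDerivAt (fun b => cy t x b) (cyy t x y) y)
    -- continuity of the partial derivatives of `c` on `(0,∞) × cl(Ω)`
    (hctcont : ContinuousOn (fun q : ℝ × ℝ × ℝ => ct q.1 q.2.1 q.2.2)
      (Set.Ioi 0 ×ˢ Set.Icc 0 L₁ ×ˢ Set.Icc 0 L₂))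
    (hcxcont : ContinuousOn (fun q : ℝ × ℝ × ℝ => cx q.1 q.2.1 q.2.2)
      (Set.Ioi 0 ×ˢ Set.Icc 0 L₁ ×ˢ Set.Icc 0 L₂))
    (hcycont : ContinuousOn (fun q : ℝ × ℝ × ℝ => cy q.1 q.2.1 q.2.2)
      (Set.Ioi 0 ×ˢ Set.Icc 0 L₁ ×ˢ Set.Icc 0 L₂))
    (hcxxcont : ContinuousOn (fun q : ℝ × ℝ × ℝ => cxx q.1 q.2.1 q.2.2)
      (Set.Ioi 0 ×ˢ Set.Icc 0 L₁ ×ˢ Set.Icc 0 L₂))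
    (hcyycont : ContinuousOn (fun q : ℝ × ℝ × ℝ => cyy q.1 q.2.1 q.2.2)
      (Set.Ioi 0 ×ˢ Set.Icc 0 L₁ ×ˢ Set.Icc 0 L₂))
    -- spatial derivatives of the velocity on `(0,∞) × Ω`
    (hu₁x : ∀ t > (0:ℝ), ∀ x ∈ Set.Ioo 0 L₁, ∀ y ∈ Set.Ioo 0 L₂,
      HasDerivAt (fun a => u₁ t a y) (u₁x t x y) x)
    (hu₂y : ∀ t > (0:ℝ), ∀ x ∈ Set.Ioo 0 L₁, ∀ y ∈ Set.Ioo 0 L₂,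
      HasDerivAt (fun b => u₂ t x b) (u₂y t x y) y)
    -- (i) incompressibility on `(0,∞) × Ω`
    (hdiv : ∀ t > (0:ℝ), ∀ x ∈ Set.Ioo 0 L₁, ∀ y ∈ Set.Ioo 0 L₂,
      u₁x t x y + u₂y t x y = 0)
    -- (ii) the PDE on `(0,∞) × Ω`
    (hpde : ∀ t > (0:ℝ), ∀ x ∈ Set.Ioo 0 L₁, ∀ y ∈ Set.Ioo 0 L₂,
      (1 + k) * ct t x y + u₁ t x y * cx t x y + u₂ t x y * cy t x y =
        D * (cxx t x y + cyy t x y) - κ x y * c t x y)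
    -- (iii) no-penetration and no-flux boundary conditions
    (hbc₁ : ∀ t > (0:ℝ), ∀ y ∈ Set.Icc 0 L₂,
      u₁ t 0 y = 0 ∧ u₁ t L₁ y = 0 ∧ cx t 0 y = 0 ∧ cx t L₁ y = 0)
    (hbc₂ : ∀ t > (0:ℝ), ∀ x ∈ Set.Icc 0 L₁,
      u₂ t x 0 = 0 ∧ u₂ t x L₂ = 0 ∧ cy t x 0 = 0 ∧ cy t x L₂ = 0)
    -- (iv) bounds on the initial data
    (hinit : ∀ x ∈ Set.Icc 0 L₁, ∀ y ∈ Set.Icc 0 L₂, 0 ≤ c 0 x y ∧ c 0 x y ≤ M₂) :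
    ∀ t, 0 ≤ t → ∀ x ∈ Set.Icc 0 L₁, ∀ y ∈ Set.Icc 0 L₂,
      0 ≤ c t x y ∧ c t x y ≤ M₂ * Real.exp (-κ₁ * t / (1 + k)) :=
  stmt_19_general L₁ L₂ k D M₂ κ₁ hL₁ hL₂ hk hD hM₂ κ hκcont hκlb u₁ u₂ c ct cx cy cxx cyy hu₁cont
    hu₂cont hccont hct hcx hcy hcxx hcyy hctcont hcxcont hcycont hcxxcont hcyycont hpde hbc₁ hbc₂
    hinit
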